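/- arXiv:1107.3847 — 4 statements merged into one kernel-verified Lean document; each statement's English description precedes it below -/
import Mathlib

section
/- Let n ≥ 1, let V = ℝ^{2n+1} with standard basis e₁,…,e₂ₙ,e₂ₙ₊₁, and let V' ⊆ V be the span of e₁,…,e₂ₙ. Let 𝔤 be the subspace of (2n+1)×(2n+1) real matrices of block form [[A, b],[0, c]] where the top-left 2n×2n block A is skew-symmetric, b ∈ ℝ^{2n} is an arbitrary column, and c ∈ ℝ (equivalently: M i j = −M j i for all i,j ≤ 2n, and the last row of M vanishes except possibly in its last entry). Then an alternating bilinear map T : V × V → V lies in the image of the map 𝒜, i.e. T(u,w) = S(u)w − S(w)u for some linear S : V → 𝔤, if and only if the last coordinate of T(u,w) vanishes for all u, w ∈ V'. -/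
/-!
Write `V = V' ⊕ K e`, with `e` the distinguished basis vector and `π` the projection onto `V'`
along `e`. Necessity is immediate: elements of `𝔤` map `V'` into `V'`. Conversely, the Koszul
formula `⟨S(u)w, v⟩ = (⟨T(u,w),v⟩ + ⟨T(v,u),w⟩ - ⟨T(w,v),u⟩)/2` inverts `𝒜` on skew-symmetric
matrices. Applied to `(u, w) ↦ T(πu, πw)` it gives skew matrices whose last row vanishes
because `T(V', V')` has no `e`-component; adding the column `e ↦ T(πu, e)` accounts for the
remaining part of `T`, since `T(u, w) = T(πu, πw) + w_e T(πu, e) - u_e T(πw, e)`.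
-/

open Matrix

/-- The Lie algebra `𝔤` of the structure group of a sub-Riemannian structure:
`(2n+1)×(2n+1)` real matrices of block form `[[A, b], [0, c]]` with the top-left
`2n×2n` block `A` skew-symmetric, `b ∈ ℝ^{2n}` arbitrary and `c ∈ ℝ`;
equivalently `M i j = - M j i` for `i, j < 2n` and the last row vanishes except
possibly at the last entry. -/
def memSubRiemannAlg (n : ℕ) (M : Matrix (Fin (2 * n + 1)) (Fin (2 * n + 1)) ℝ) : Prop :=
  (∀ i j : Fin (2 * n + 1), (i : ℕ) < 2 * n → (j : ℕ) < 2 * n → M i j = - M j i) ∧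
  (∀ j : Fin (2 * n + 1), (j : ℕ) < 2 * n → M (Fin.last (2 * n)) j = 0)

variable {K ι : Type*} [Field K] [DecidableEq ι]

section EraseCoord

variable (o : ι)

def eraseCoord : (ι → K) →ₗ[K] (ι → K) :=
  LinearMap.id - LinearMap.single K (fun _ => K) o ∘ₗ LinearMap.proj o

theorem eraseCoord_apply (u : ι → K) : eraseCoord o u = u - Pi.single o (u o) := rfl

theorem eraseCoord_apply_self (u : ι → K) : eraseCoord o u o = 0 := by
  simp [eraseCoord_apply]

theorem eraseCoord_single_self (a : K) : eraseCoord o (Pi.single o a) = 0 := by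
  simp [eraseCoord_apply]

theorem eraseCoord_add_smul_single (u : ι → K) : eraseCoord o u + u o • Pi.single o 1 = u := by
  rw [eraseCoord_apply, ← Pi.single_smul', smul_eq_mul, mul_one, sub_add_cancel]

end EraseCoord

variable [Fintype ι]

section Koszul

variable (T : (ι → K) →ₗ[K] (ι → K) →ₗ[K] (ι → K))

def koszulOp : (ι → K) →ₗ[K] (ι → K) →ₗ[K] (ι → K) :=
  LinearMap.mk₂ K
    (fun u w i => (T u w i + w ⬝ᵥ T (Pi.single i 1) u - u ⬝ᵥ T w (Pi.single i 1)) / 2)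
    (fun _ _ _ => by
      ext
      simp only [map_add, LinearMap.add_apply, Pi.add_apply, dotProduct_add, add_dotProduct]
      ring)
    (fun _ _ _ => by
      ext
      simp only [map_smul, LinearMap.smul_apply, Pi.smul_apply, dotProduct_smul, smul_dotProduct,
        smul_eq_mul]
      ring)
    (fun _ _ _ => by
      ext
      simp only [map_add, LinearMap.add_apply, Pi.add_apply, dotProduct_add, add_dotProduct]
      ring)
    (fun _ _ _ => by
      ext
      simp only [map_smul, LinearMap.smul_apply, Pi.smul_apply, dotProduct_smul, smul_dotProduct,
        smul_eq_mul]
      ring)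

def koszul : (ι → K) →ₗ[K] Matrix ι ι K :=
  LinearMap.toMatrix'.toLinearMap ∘ₗ koszulOp T

theorem koszul_mulVec (u w : ι → K) : koszul T u *ᵥ w = koszulOp T u w :=
  LinearMap.toMatrix'_mulVec _ w

theorem koszul_apply (u : ι → K) (i j : ι) :
    koszul T u i j = (T u (Pi.single j 1) i + T (Pi.single i 1) u j
      - u ⬝ᵥ T (Pi.single j 1) (Pi.single i 1)) / 2 := by
  simp [koszul, koszulOp, LinearMap.toMatrix'_apply, single_dotProduct]

variable {T}

theorem koszul_apply_swap (hT : T.IsAlt) (u : ι → K) (i j : ι) :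
    koszul T u j i = -koszul T u i j := by
  rw [koszul_apply, koszul_apply, ← hT.neg u (Pi.single i 1),
    ← hT.neg u (Pi.single j 1), ← hT.neg (Pi.single j 1) (Pi.single i 1)]
  simp only [Pi.neg_apply, dotProduct_neg]
  ring

theorem koszul_mulVec_sub_mulVec [NeZero (2 : K)] (hT : T.IsAlt) (u w : ι → K) :
    koszul T u *ᵥ w - koszul T w *ᵥ u = T u w := by
  ext i
  simp only [koszul_mulVec, koszulOp, LinearMap.mk₂_apply, Pi.sub_apply]
  rw [← hT.neg u w, ← hT.neg u (Pi.single i 1), ← hT.neg w (Pi.single i 1)]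
  simp only [Pi.neg_apply, dotProduct_neg]
  linear_combination add_halves (T u w i)

end Koszul

section SubRiemannLift

variable (o : ι)

def memSubRiemannAlgAt (M : Matrix ι ι K) : Prop :=
  (∀ i j, i ≠ o → j ≠ o → M i j = -M j i) ∧ ∀ j, j ≠ o → M o j = 0

variable {o} in
theorem mulVec_apply_eq_zero {M : Matrix ι ι K} (hM : ∀ j, j ≠ o → M o j = 0) {w : ι → K}
    (hw : w o = 0) : (M *ᵥ w) o = 0 := by
  refine Finset.sum_eq_zero fun j _ => ?_
  by_cases hj : j = o
  · simp [hj, hw]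
  · simp [hM j hj]

variable (T : (ι → K) →ₗ[K] (ι → K) →ₗ[K] (ι → K))

def subRiemannLift : (ι → K) →ₗ[K] Matrix ι ι K :=
  koszul (T.compl₁₂ (eraseCoord o) (eraseCoord o)) +
    LinearMap.toMatrix'.toLinearMap ∘ₗ LinearMap.smulRightₗ (LinearMap.proj o) ∘ₗ
      T.flip (Pi.single o 1) ∘ₗ eraseCoord o

theorem subRiemannLift_mulVec (u w : ι → K) :
    subRiemannLift o T u *ᵥ w = koszul (T.compl₁₂ (eraseCoord o) (eraseCoord o)) u *ᵥ w
      + w o • T (eraseCoord o u) (Pi.single o 1) := by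
  simp [subRiemannLift, add_mulVec, LinearMap.toMatrix'_mulVec]

theorem subRiemannLift_apply (u : ι → K) (i j : ι) :
    subRiemannLift o T u i j = koszul (T.compl₁₂ (eraseCoord o) (eraseCoord o)) u i j
      + Pi.single (M := fun _ => K) j 1 o * T (eraseCoord o u) (Pi.single o 1) i := by
  simp [subRiemannLift, LinearMap.toMatrix'_apply]

variable {o T}

theorem memSubRiemannAlgAt_subRiemannLift (hT : T.IsAlt)
    (hV : ∀ u w, u o = 0 → w o = 0 → T u w o = 0) (u : ι → K) :
    memSubRiemannAlgAt o (subRiemannLift o T u) := by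
  have hT' : (T.compl₁₂ (eraseCoord o) (eraseCoord o)).IsAlt := fun v => hT _
  refine ⟨fun i j hi hj => ?_, fun j hj => ?_⟩
  · rw [subRiemannLift_apply, subRiemannLift_apply, Pi.single_eq_of_ne hi.symm,
      Pi.single_eq_of_ne hj.symm, koszul_apply_swap hT']
    ring
  · rw [subRiemannLift_apply, koszul_apply, Pi.single_eq_of_ne hj.symm]
    simp [eraseCoord_single_self, hV _ _ (eraseCoord_apply_self o u) (eraseCoord_apply_self o _)]

theorem subRiemannLift_mulVec_sub_mulVec [NeZero (2 : K)] (hT : T.IsAlt) (u w : ι → K) :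
    subRiemannLift o T u *ᵥ w - subRiemannLift o T w *ᵥ u = T u w := by
  have hT' : (T.compl₁₂ (eraseCoord o) (eraseCoord o)).IsAlt := fun v => hT _
  have hK := koszul_mulVec_sub_mulVec hT' u w
  rw [LinearMap.compl₁₂_apply] at hK
  rw [subRiemannLift_mulVec, subRiemannLift_mulVec]
  conv_rhs => rw [← eraseCoord_add_smul_single o u, ← eraseCoord_add_smul_single o w]
  simp only [map_add, map_smul, LinearMap.add_apply, LinearMap.smul_apply, hT (Pi.single o 1),
    ← hT.neg (eraseCoord o w) (Pi.single o 1)]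
  linear_combination (norm := module) hK

theorem exists_memSubRiemannAlgAt_eq_mulVec_sub_mulVec_iff [NeZero (2 : K)] (hT : T.IsAlt) :
    (∃ S : (ι → K) →ₗ[K] Matrix ι ι K,
        (∀ u, memSubRiemannAlgAt o (S u)) ∧ ∀ u w, T u w = S u *ᵥ w - S w *ᵥ u) ↔
      ∀ u w : ι → K, u o = 0 → w o = 0 → T u w o = 0 := by
  refine ⟨?_, fun hV => ⟨subRiemannLift o T, memSubRiemannAlgAt_subRiemannLift hT hV,
    fun u w => (subRiemannLift_mulVec_sub_mulVec hT u w).symm⟩⟩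
  rintro ⟨S, hS, hTS⟩ u w hu hw
  rw [hTS, Pi.sub_apply, mulVec_apply_eq_zero (hS u).2 hw, mulVec_apply_eq_zero (hS w).2 hu,
    sub_zero]

end SubRiemannLift

theorem memSubRiemannAlg_iff (n : ℕ) (M : Matrix (Fin (2 * n + 1)) (Fin (2 * n + 1)) ℝ) :
    memSubRiemannAlg n M ↔ memSubRiemannAlgAt (Fin.last (2 * n)) M := by
  have hlt : ∀ i : Fin (2 * n + 1), (i : ℕ) < 2 * n ↔ i ≠ Fin.last (2 * n) := fun i => by
    rw [← Fin.lt_last_iff_ne_last, Fin.lt_def, Fin.val_last]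
  simp only [memSubRiemannAlg, memSubRiemannAlgAt, hlt]

theorem subRiemann_A_image_iff_general (n : ℕ)
    (T : (Fin (2 * n + 1) → ℝ) →ₗ[ℝ] (Fin (2 * n + 1) → ℝ) →ₗ[ℝ] (Fin (2 * n + 1) → ℝ))
    (hT : ∀ u, T u u = 0) :
    (∃ S : (Fin (2 * n + 1) → ℝ) →ₗ[ℝ] Matrix (Fin (2 * n + 1)) (Fin (2 * n + 1)) ℝ,
        (∀ u, memSubRiemannAlg n (S u)) ∧
        ∀ u w, T u w = (S u).mulVec w - (S w).mulVec u) ↔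
    (∀ u w : Fin (2 * n + 1) → ℝ,
        u (Fin.last (2 * n)) = 0 → w (Fin.last (2 * n)) = 0 →
        T u w (Fin.last (2 * n)) = 0) := by
  simp only [memSubRiemannAlg_iff]
  exact exists_memSubRiemannAlgAt_eq_mulVec_sub_mulVec_iff hT

/-- An alternating bilinear map `T : V × V → V`, `V = ℝ^{2n+1}`, lies in the image of
`𝒜 : Hom(V, 𝔤) → Hom(V ∧ V, V)`, `𝒜(S)(u,w) = S(u)w - S(w)u`, if and only if the last
coordinate of `T(u,w)` vanishes whenever `u, w` lie in the span `V'` of the first `2n`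
basis vectors. -/
theorem subRiemann_A_image_iff (n : ℕ) (hn : 1 ≤ n)
    (T : (Fin (2 * n + 1) → ℝ) →ₗ[ℝ] (Fin (2 * n + 1) → ℝ) →ₗ[ℝ] (Fin (2 * n + 1) → ℝ))
    (hT : ∀ u, T u u = 0) :
    (∃ S : (Fin (2 * n + 1) → ℝ) →ₗ[ℝ] Matrix (Fin (2 * n + 1)) (Fin (2 * n + 1)) ℝ,
        (∀ u, memSubRiemannAlg n (S u)) ∧
        ∀ u w, T u w = (S u).mulVec w - (S w).mulVec u) ↔
    (∀ u w : Fin (2 * n + 1) → ℝ,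
        u (Fin.last (2 * n)) = 0 → w (Fin.last (2 * n)) = 0 →
        T u w (Fin.last (2 * n)) = 0) :=
  subRiemann_A_image_iff_general n T hT
end

section
/- Let n ≥ 1 and let J = fromBlocks 0 (−1) 1 0 be the standard 2n×2n symplectic matrix. If M is an invertible real 2n×2n matrix such that MᵀM = c • 1 for some real number c, and MᵀJM = J, then c = 1; that is, every conformally orthogonal symplectic matrix is orthogonal. -/
open Matrix

namespace Matrix

variable {ι R : Type*} [Fintype ι] [DecidableEq ι] [CommRing R] [LinearOrder R]
  [IsStrictOrderedRing R] {M : Matrix ι ι R} {c : R}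

theorem nonneg_of_transpose_mul_self_eq_smul_one [Nonempty ι] (h : Mᵀ * M = c • 1) : 0 ≤ c := by
  obtain ⟨i⟩ := ‹Nonempty ι›
  have hdiag : c = ∑ k, M k i * M k i := by
    simpa [mul_apply] using (congrFun (congrFun h i) i).symm
  exact hdiag ▸ Finset.sum_nonneg fun k _ => mul_self_nonneg (M k i)

theorem eq_one_of_transpose_mul_self_eq_smul_one_of_det_eq_one [Nonempty ι]
    (h : Mᵀ * M = c • 1) (hdet : M.det = 1) : c = 1 := by
  have hpow : c ^ Fintype.card ι = 1 := by
    simpa [det_mul, det_transpose, det_smul, hdet] using (congrArg det h).symm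
  exact (pow_eq_one_iff_of_nonneg (nonneg_of_transpose_mul_self_eq_smul_one h)
    Fintype.card_ne_zero).mp hpow

end Matrix

theorem conformal_symplectic_is_orthogonal_general (n : ℕ) (hn : 1 ≤ n)
    (J M : Matrix (Fin n ⊕ Fin n) (Fin n ⊕ Fin n) ℝ) (c : ℝ)
    (hJ : J = Matrix.fromBlocks 0 (-1) 1 0)
    (hconf : Mᵀ * M = c • (1 : Matrix (Fin n ⊕ Fin n) (Fin n ⊕ Fin n) ℝ))
    (hsymp : Mᵀ * J * M = J) :
    c = 1 := by
  have : Nonempty (Fin n ⊕ Fin n) := ⟨.inl ⟨0, hn⟩⟩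
  subst hJ
  have hsympM : M ∈ symplecticGroup (Fin n) ℝ := SymplecticGroup.mem_iff'.mpr hsymp
  exact eq_one_of_transpose_mul_self_eq_smul_one_of_det_eq_one hconf
    (SymplecticGroup.det_eq_one hsympM)

/-- Every conformally orthogonal symplectic matrix is orthogonal: if `M` is invertible
with `MᵀM = c • 1` and `MᵀJM = J` for the standard symplectic matrix
`J = fromBlocks 0 (-1) 1 0`, then `c = 1`. -/
theorem conformal_symplectic_is_orthogonal (n : ℕ) (hn : 1 ≤ n)
    (J M : Matrix (Fin n ⊕ Fin n) (Fin n ⊕ Fin n) ℝ) (c : ℝ)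
    (hJ : J = Matrix.fromBlocks 0 (-1) 1 0)
    (hM : IsUnit M)
    (hconf : Mᵀ * M = c • (1 : Matrix (Fin n ⊕ Fin n) (Fin n ⊕ Fin n) ℝ))
    (hsymp : Mᵀ * J * M = J) :
    c = 1 :=
  conformal_symplectic_is_orthogonal_general n hn J M c hJ hconf hsymp
end

section
/- Let n ≥ 1, let V = ℝ^{2n+1} with standard basis e₁,…,e₂ₙ,e₂ₙ₊₁, let V' ⊆ V be the span of e₁,…,e₂ₙ, and let J₀ = fromBlocks 0 (−1) 1 0 be the standard 2n×2n complex structure matrix. Let 𝔲(n) = {A : A is a real 2n×2n matrix with Aᵀ = −A and A J₀ = J₀ A}, and let 𝔤₁ be the space of (2n+1)×(2n+1) real matrices of block form [[A, b],[0, 0]] with A ∈ 𝔲(n) and b ∈ ℝ^{2n}. Then an alternating bilinear map T : V × V → V satisfies T(u,w) = S(u)w − S(w)u for some linear S : V → 𝔤₁ if and only if: (i) T(u, w) ∈ V' for all u, w ∈ V, and (ii) the restriction of T to V' × V' equals (u,w) ↦ A(u)w − A(w)u for some linear map A : V' → 𝔲(n). -/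
open Matrix

/-- The unitary Lie algebra `𝔲(n)` realized as real `2n×2n` matrices: skew-symmetric
matrices commuting with the standard complex structure `J₀ = fromBlocks 0 (-1) 1 0`. -/
def memUnitaryAlg (n : ℕ) (A : Matrix (Fin n ⊕ Fin n) (Fin n ⊕ Fin n) ℝ) : Prop :=
  Aᵀ = -A ∧
  A * (Matrix.fromBlocks 0 (-1) 1 0) = (Matrix.fromBlocks 0 (-1) 1 0) * A

/-- The Lie algebra `𝔤₁` of the first reduced structure group: `(2n+1)×(2n+1)` real
matrices of block form `[[A, b], [0, 0]]` with `A ∈ 𝔲(n)` and `b ∈ ℝ^{2n}`.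
Here `ℝ^{2n+1}` is indexed by `(Fin n ⊕ Fin n) ⊕ Unit`. -/
def memG1Alg (n : ℕ)
    (M : Matrix ((Fin n ⊕ Fin n) ⊕ Unit) ((Fin n ⊕ Fin n) ⊕ Unit) ℝ) : Prop :=
  memUnitaryAlg n (Matrix.of fun i j => M (Sum.inl i) (Sum.inl j)) ∧
  ∀ j, M (Sum.inr ()) j = 0

/-!
Write `V = V' ⊕ ℝe` with `e` the last basis vector. Both `T` and `𝒜(S)` are alternating, so each
is determined by its values on `V' × V'` and on `V' × {e}`. If `S(u) = [[A(u), b(u)], [0, 0]]`, then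
`𝒜(S)` has vanishing last coordinate, restricts on `V' × V'` to `(x, y) ↦ A(x)y − A(y)x`, and
satisfies `𝒜(S)(x, e) = b(x)` for `x ∈ V'`. Since the translation part `b` is unconstrained, it can
be chosen as `b(u) = T(u, e)`, so only conditions (i) and (ii) remain.
-/

section

variable {R m : Type*} [CommRing R]

theorem elim_comp_inl_zero_of_inr_eq_zero {v : m ⊕ Unit → R} (hv : v (Sum.inr ()) = 0) :
    Sum.elim (v ∘ Sum.inl) 0 = v := by
  ext (i | ⟨⟩) <;> simp [hv]

theorem elim_comp_inl_zero_add_smul (v : m ⊕ Unit → R) :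
    Sum.elim (v ∘ Sum.inl) 0 + v (Sum.inr ()) • (Sum.elim 0 1 : m ⊕ Unit → R) = v := by
  ext (i | ⟨⟩) <;> simp

theorem LinearMap.IsAlt.apply_eq_elim {N : Type*} [AddCommGroup N] [Module R N]
    {B : (m ⊕ Unit → R) →ₗ[R] (m ⊕ Unit → R) →ₗ[R] N} (hB : B.IsAlt) (u w : m ⊕ Unit → R) :
    B u w = B (Sum.elim (u ∘ Sum.inl) 0) (Sum.elim (w ∘ Sum.inl) 0)
      + w (Sum.inr ()) • B (Sum.elim (u ∘ Sum.inl) 0) (Sum.elim 0 1)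
      - u (Sum.inr ()) • B (Sum.elim (w ∘ Sum.inl) 0) (Sum.elim 0 1) := by
  conv_lhs => rw [← elim_comp_inl_zero_add_smul u, ← elim_comp_inl_zero_add_smul w]
  simp only [map_add, map_smul, LinearMap.add_apply, LinearMap.smul_apply, hB.self_eq_zero,
    ← hB.neg _ (Sum.elim 0 1), smul_zero, smul_neg]
  module

theorem LinearMap.IsAlt.ext_elim {N : Type*} [AddCommGroup N] [Module R N]
    {B B' : (m ⊕ Unit → R) →ₗ[R] (m ⊕ Unit → R) →ₗ[R] N} (hB : B.IsAlt) (hB' : B'.IsAlt)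
    (h : ∀ x y : m → R, B (Sum.elim x 0) (Sum.elim y 0) = B' (Sum.elim x 0) (Sum.elim y 0))
    (he : ∀ x : m → R, B (Sum.elim x 0) (Sum.elim 0 1) = B' (Sum.elim x 0) (Sum.elim 0 1)) :
    B = B' := by
  ext1 u; ext1 w
  rw [hB.apply_eq_elim, hB'.apply_eq_elim, h, he, he]

def IsAffineBlock (P : Matrix m m R → Prop) (M : Matrix (m ⊕ Unit) (m ⊕ Unit) R) : Prop :=
  P M.toBlocks₁₁ ∧ ∀ j, M (Sum.inr ()) j = 0

def affineLift (A : (m → R) →ₗ[R] Matrix m m R) (b : (m ⊕ Unit → R) →ₗ[R] (m → R)) :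
    (m ⊕ Unit → R) →ₗ[R] Matrix (m ⊕ Unit) (m ⊕ Unit) R where
  toFun u := fromBlocks (A (u ∘ Sum.inl)) (replicateCol Unit (b u)) 0 0
  map_add' u w := by
    simp only [Pi.add_comp, map_add, replicateCol_add, fromBlocks_add, add_zero]
  map_smul' c u := by
    simp only [Pi.smul_comp, map_smul, replicateCol_smul, fromBlocks_smul, smul_zero,
      RingHom.id_apply]

theorem affineLift_isAffineBlock {P : Matrix m m R → Prop} {A : (m → R) →ₗ[R] Matrix m m R}
    (hA : ∀ x, P (A x)) (b : (m ⊕ Unit → R) →ₗ[R] (m → R)) (u : m ⊕ Unit → R) :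
    IsAffineBlock P (affineLift A b u) :=
  ⟨hA _, fun j => by rcases j with j | j <;> rfl⟩

variable [Fintype m]

theorem IsAffineBlock.mulVec_inr_eq_zero {P : Matrix m m R → Prop}
    {M : Matrix (m ⊕ Unit) (m ⊕ Unit) R} (hM : IsAffineBlock P M) (w : m ⊕ Unit → R) :
    (M *ᵥ w) (Sum.inr ()) = 0 := by
  simp [mulVec, dotProduct, hM.2]

theorem mulVec_elim_zero_comp_inl (M : Matrix (m ⊕ Unit) (m ⊕ Unit) R) (y : m → R) :
    (M *ᵥ Sum.elim y 0) ∘ Sum.inl = M.toBlocks₁₁ *ᵥ y := by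
  ext i
  simp [mulVec, dotProduct, Fintype.sum_sum_type, toBlocks₁₁]

theorem fromBlocks_replicateCol_zero_mulVec (M : Matrix m m R) (c : m → R) (v : m ⊕ Unit → R) :
    fromBlocks M (replicateCol Unit c) (0 : Matrix Unit m R) 0 *ᵥ v =
      Sum.elim (M *ᵥ (v ∘ Sum.inl) + v (Sum.inr ()) • c) 0 := by
  ext (i | ⟨⟩) <;> simp [mulVec, dotProduct, mul_comm]

/-- The map `𝒜` of the paper, as a bilinear map. -/
def alternation (S : (m ⊕ Unit → R) →ₗ[R] Matrix (m ⊕ Unit) (m ⊕ Unit) R) :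
    (m ⊕ Unit → R) →ₗ[R] (m ⊕ Unit → R) →ₗ[R] (m ⊕ Unit → R) :=
  LinearMap.mk₂ R (fun u w => S u *ᵥ w - S w *ᵥ u)
    (fun u u' w => by simp only [map_add, add_mulVec, mulVec_add]; abel)
    (fun c u w => by simp only [map_smul, smul_mulVec, mulVec_smul, smul_sub])
    (fun u w w' => by simp only [map_add, add_mulVec, mulVec_add]; abel)
    (fun c u w => by simp only [map_smul, smul_mulVec, mulVec_smul, smul_sub])

@[simp]
theorem alternation_apply (S : (m ⊕ Unit → R) →ₗ[R] Matrix (m ⊕ Unit) (m ⊕ Unit) R)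
    (u w : m ⊕ Unit → R) : alternation S u w = S u *ᵥ w - S w *ᵥ u :=
  rfl

theorem alternation_isAlt (S : (m ⊕ Unit → R) →ₗ[R] Matrix (m ⊕ Unit) (m ⊕ Unit) R) :
    (alternation S).IsAlt :=
  fun _ => sub_self _

def topLeftBlock (S : (m ⊕ Unit → R) →ₗ[R] Matrix (m ⊕ Unit) (m ⊕ Unit) R) :
    (m → R) →ₗ[R] Matrix m m R where
  toFun x := (S (Sum.elim x 0)).toBlocks₁₁
  map_add' x y := by
    have : Sum.elim (x + y) (0 : Unit → R) = Sum.elim x 0 + Sum.elim y 0 := by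
      rw [← Sum.elim_add_add, add_zero]
    rw [this, map_add]
    rfl
  map_smul' c x := by
    have : Sum.elim (c • x) (0 : Unit → R) = c • Sum.elim x 0 := by
      ext (i | i) <;> simp
    rw [this, map_smul]
    rfl

theorem alternation_elim_zero_comp_inl
    (S : (m ⊕ Unit → R) →ₗ[R] Matrix (m ⊕ Unit) (m ⊕ Unit) R) (x y : m → R) :
    alternation S (Sum.elim x 0) (Sum.elim y 0) ∘ Sum.inl =
      topLeftBlock S x *ᵥ y - topLeftBlock S y *ᵥ x := by
  rw [alternation_apply, Pi.sub_comp, mulVec_elim_zero_comp_inl, mulVec_elim_zero_comp_inl]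
  rfl

theorem alternation_affineLift_apply (A : (m → R) →ₗ[R] Matrix m m R)
    (b : (m ⊕ Unit → R) →ₗ[R] (m → R)) (u w : m ⊕ Unit → R) :
    alternation (affineLift A b) u w = Sum.elim (A (u ∘ Sum.inl) *ᵥ (w ∘ Sum.inl)
      - A (w ∘ Sum.inl) *ᵥ (u ∘ Sum.inl) + w (Sum.inr ()) • b u - u (Sum.inr ()) • b w) 0 := by
  ext (i | ⟨⟩) <;> simp [affineLift, fromBlocks_replicateCol_zero_mulVec]
  ring

theorem exists_alternation_eq_iff (P : Matrix m m R → Prop)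
    (T : (m ⊕ Unit → R) →ₗ[R] (m ⊕ Unit → R) →ₗ[R] (m ⊕ Unit → R)) (hT : T.IsAlt) :
    (∃ S : (m ⊕ Unit → R) →ₗ[R] Matrix (m ⊕ Unit) (m ⊕ Unit) R,
        (∀ u, IsAffineBlock P (S u)) ∧ alternation S = T) ↔
      ((∀ u w, T u w (Sum.inr ()) = 0) ∧ ∃ A : (m → R) →ₗ[R] Matrix m m R, (∀ x, P (A x)) ∧
        ∀ x y, T (Sum.elim x 0) (Sum.elim y 0) ∘ Sum.inl = A x *ᵥ y - A y *ᵥ x) := by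
  constructor
  · rintro ⟨S, hS, rfl⟩
    refine ⟨fun u w => ?_, topLeftBlock S, fun _ => (hS _).1, alternation_elim_zero_comp_inl S⟩
    rw [alternation_apply, Pi.sub_apply, (hS u).mulVec_inr_eq_zero, (hS w).mulVec_inr_eq_zero,
      sub_zero]
  · rintro ⟨hT₀, A, hA, hAT⟩
    let b : (m ⊕ Unit → R) →ₗ[R] (m → R) :=
      LinearMap.funLeft R R Sum.inl ∘ₗ T.flip (Sum.elim 0 1)
    refine ⟨affineLift A b, affineLift_isAffineBlock hA b,
      (alternation_isAlt _).ext_elim hT (fun x y => ?_) (fun x => ?_)⟩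
    · rw [alternation_affineLift_apply, ← elim_comp_inl_zero_of_inr_eq_zero (hT₀ _ _), hAT]
      simp
    · rw [alternation_affineLift_apply]
      ext (i | ⟨⟩) <;> simp [b, hT₀]

end

theorem G1_A_image_iff_general (n : ℕ)
    (T : (((Fin n ⊕ Fin n) ⊕ Unit) → ℝ) →ₗ[ℝ]
         (((Fin n ⊕ Fin n) ⊕ Unit) → ℝ) →ₗ[ℝ] (((Fin n ⊕ Fin n) ⊕ Unit) → ℝ))
    (hT : ∀ u, T u u = 0) :
    (∃ S : (((Fin n ⊕ Fin n) ⊕ Unit) → ℝ) →ₗ[ℝ]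
            Matrix ((Fin n ⊕ Fin n) ⊕ Unit) ((Fin n ⊕ Fin n) ⊕ Unit) ℝ,
        (∀ u, memG1Alg n (S u)) ∧
        ∀ u w, T u w = (S u).mulVec w - (S w).mulVec u) ↔
    ((∀ u w, T u w (Sum.inr ()) = 0) ∧
      ∃ A : ((Fin n ⊕ Fin n) → ℝ) →ₗ[ℝ] Matrix (Fin n ⊕ Fin n) (Fin n ⊕ Fin n) ℝ,
        (∀ x, memUnitaryAlg n (A x)) ∧
        ∀ x y : (Fin n ⊕ Fin n) → ℝ, ∀ i : Fin n ⊕ Fin n,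
          T (Sum.elim x (0 : Unit → ℝ)) (Sum.elim y (0 : Unit → ℝ)) (Sum.inl i) =
            ((A x).mulVec y - (A y).mulVec x) i) := by
  have hG1 : ∀ M, memG1Alg n M ↔ IsAffineBlock (memUnitaryAlg n) M := fun _ => Iff.rfl
  simp only [hG1, eq_comm (a := T _ _), ← alternation_apply, ← LinearMap.ext_iff₂]
  simpa only [funext_iff, Function.comp_apply] using
    exists_alternation_eq_iff (memUnitaryAlg n) T hT

/-- An alternating bilinear map `T : V × V → V` on `V = ℝ^{2n+1}` lies in the image of
`𝒜 : Hom(V, 𝔤₁) → Hom(V ∧ V, V)`, `𝒜(S)(u,w) = S(u)w - S(w)u`, if and only if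
(i) `T` takes values in `V'` (the span of the first `2n` basis vectors), and
(ii) the restriction of `T` to `V' × V'` is `(u,w) ↦ A(u)w − A(w)u` for some linear
`A : V' → 𝔲(n)`. -/
theorem G1_A_image_iff (n : ℕ) (hn : 1 ≤ n)
    (T : (((Fin n ⊕ Fin n) ⊕ Unit) → ℝ) →ₗ[ℝ]
         (((Fin n ⊕ Fin n) ⊕ Unit) → ℝ) →ₗ[ℝ] (((Fin n ⊕ Fin n) ⊕ Unit) → ℝ))
    (hT : ∀ u, T u u = 0) :
    (∃ S : (((Fin n ⊕ Fin n) ⊕ Unit) → ℝ) →ₗ[ℝ]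
            Matrix ((Fin n ⊕ Fin n) ⊕ Unit) ((Fin n ⊕ Fin n) ⊕ Unit) ℝ,
        (∀ u, memG1Alg n (S u)) ∧
        ∀ u w, T u w = (S u).mulVec w - (S w).mulVec u) ↔
    ((∀ u w, T u w (Sum.inr ()) = 0) ∧
      ∃ A : ((Fin n ⊕ Fin n) → ℝ) →ₗ[ℝ] Matrix (Fin n ⊕ Fin n) (Fin n ⊕ Fin n) ℝ,
        (∀ x, memUnitaryAlg n (A x)) ∧
        ∀ x y : (Fin n ⊕ Fin n) → ℝ, ∀ i : Fin n ⊕ Fin n,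
          T (Sum.elim x (0 : Unit → ℝ)) (Sum.elim y (0 : Unit → ℝ)) (Sum.inl i) =
            ((A x).mulVec y - (A y).mulVec x) i) :=
  G1_A_image_iff_general n T hT
end

section
/- Let p, q, r, s be nonzero real numbers with p·r ≠ q·s. Let N be the 4×4 real matrix determined on the standard basis e₁, e₂, e₃, e₄ of ℝ⁴ by N e₁ = (1/r) e₃, N e₂ = (1/s) e₄, N e₃ = −(1/p) e₁, N e₄ = −(1/q) e₂ (all other matrix entries zero). Then for every real number f, the matrix (f • N)² is not equal to −1 (minus the 4×4 identity matrix). -/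
open Matrix

/-! `(f • N)²` is diagonal with entries `-f² / (p r)` and `-f² / (q s)`, so `(f • N)² = -1`
forces `f² = p r` and `f² = q s`. -/

theorem smul_mul_smul_antidiagonal_blocks {R : Type*} [CommRing R] (f a b c d : R) :
    (f • !![0, 0, a, 0; 0, 0, 0, b; c, 0, 0, 0; 0, d, 0, 0]) *
        (f • !![0, 0, a, 0; 0, 0, 0, b; c, 0, 0, 0; 0, d, 0, 0]) =
      !![f ^ 2 * (a * c), 0, 0, 0; 0, f ^ 2 * (b * d), 0, 0;
        0, 0, f ^ 2 * (a * c), 0; 0, 0, 0, f ^ 2 * (b * d)] := by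
  ext i j
  fin_cases i <;> fin_cases j <;> simp [mul_apply, Fin.sum_univ_four] <;> ring

theorem eq_mul_of_mul_inv_mul_inv_eq_one {α : Type*} [DivisionCommMonoid α] {t x y : α}
    (h : t * (x⁻¹ * y⁻¹) = 1) : t = x * y :=
  eq_of_div_eq_one (by rwa [div_eq_mul_inv, mul_inv])

theorem no_almost_complex_rescaling_general (p q r s : ℝ)
    (hprqs : p * r ≠ q * s)
    (N : Matrix (Fin 4) (Fin 4) ℝ)
    (hN : N = !![0, 0, -(1/p), 0;
                 0, 0, 0, -(1/q);
                 1/r, 0, 0, 0;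
                 0, 1/s, 0, 0]) :
    ∀ f : ℝ, (f • N) * (f • N) ≠ -1 := by
  rintro f hJ
  rw [hN, smul_mul_smul_antidiagonal_blocks] at hJ
  have hpr : f ^ 2 * (p⁻¹ * r⁻¹) = 1 := by simpa using congrFun₂ hJ 0 0
  have hqs : f ^ 2 * (q⁻¹ * s⁻¹) = 1 := by simpa using congrFun₂ hJ 1 1
  exact hprqs ((eq_mul_of_mul_inv_mul_inv_eq_one hpr).symm.trans
    (eq_mul_of_mul_inv_mul_inv_eq_one hqs))

/-- The example of a sub-Riemannian structure with no associated contact metric: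
if `p, q, r, s` are nonzero reals with `p*r ≠ q*s` and `N` is the `4×4` matrix with
`N e₁ = (1/r) e₃`, `N e₂ = (1/s) e₄`, `N e₃ = -(1/p) e₁`, `N e₄ = -(1/q) e₂`,
then `(f • N)² ≠ -1` for every real `f`: no rescaling of the operator `φ` is an
almost complex structure. -/
theorem no_almost_complex_rescaling (p q r s : ℝ)
    (hp : p ≠ 0) (hq : q ≠ 0) (hr : r ≠ 0) (hs : s ≠ 0)
    (hprqs : p * r ≠ q * s)
    (N : Matrix (Fin 4) (Fin 4) ℝ)
    (hN : N = !![0, 0, -(1/p), 0;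
                 0, 0, 0, -(1/q);
                 1/r, 0, 0, 0;
                 0, 1/s, 0, 0]) :
    ∀ f : ℝ, (f • N) * (f • N) ≠ -1 :=
  no_almost_complex_rescaling_general p q r s hprqs N hN
end
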